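/- Let E be a finite linearly ordered set and M a matroid on E. If (F'_ε, ..., F'_0, F_c, F_0, ..., F_ι) is a connected filtration of M, then the reversed complements (E \ F_ι, ..., E \ F_0, E \ F_c, E \ F'_0, ..., E \ F'_ε) form a connected filtration of the dual matroid M*, and for 1 ≤ k ≤ ι, (M|F_k)/F_{k-1})* = M*|(E \ F_{k-1}) / (E \ F_k). -/

import Mathlib

namespace AB
open Set

variable {α : Type*}

/-- A circuit of a matroid: a minimal dependent set. -/
def Circuit (M : Matroid α) (C : Set α) : Prop :=
  M.Dep C ∧ ∀ D, D ⊂ C → M.Indep D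

/-- A cocircuit: a circuit of the dual matroid. -/
def Cocircuit (M : Matroid α) (C : Set α) : Prop := Circuit M✶ C

/-- `b` is internally active for the basis `B`: `b ∈ B` and `b` is the minimum of the
fundamental cocircuit `C*(B;b)`, the unique cocircuit contained in `(M.E \ B) ∪ {b}`. -/
def IntActive [LinearOrder α] (M : Matroid α) (B : Set α) (b : α) : Prop :=
  b ∈ B ∧ ∃ C, Cocircuit M C ∧ C ⊆ (M.E \ B) ∪ {b} ∧ b ∈ C ∧ ∀ x ∈ C, b ≤ x

/-- `e` is externally active for the basis `B`: `e ∈ M.E \ B` and `e` is the minimum of the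
fundamental circuit `C(B;e)`, the unique circuit contained in `B ∪ {e}`. -/
def ExtActive [LinearOrder α] (M : Matroid α) (B : Set α) (e : α) : Prop :=
  e ∈ M.E \ B ∧ ∃ C, Circuit M C ∧ C ⊆ B ∪ {e} ∧ e ∈ C ∧ ∀ x ∈ C, e ≤ x

/-- `Int(B)`, the set of internally active elements of `B`. -/
def IntSet [LinearOrder α] (M : Matroid α) (B : Set α) : Set α := {b | IntActive M B b}

/-- `Ext(B)`, the set of externally active elements of `B`. -/
def ExtSet [LinearOrder α] (M : Matroid α) (B : Set α) : Set α := {e | ExtActive M B e}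

end AB

open scoped Matroid

namespace AB

/-- The contraction `M / C` of a set in a matroid, defined by duality:
`M / C = (M* restricted to (E \ C))*`. -/
noncomputable def contract {α : Type*} (M : Matroid α) (C : Set α) : Matroid α :=
  (M✶ ↾ (M.E \ C))✶

/-- A loop: an element of the ground set that is dependent on its own. -/
def Loop {α : Type*} (M : Matroid α) (e : α) : Prop := e ∈ M.E ∧ ¬ M.Indep {e}

/-- A coloop: a loop of the dual matroid. -/
def Coloop {α : Type*} (M : Matroid α) (e : α) : Prop := Loop M✶ e

end AB

namespace AB

/-- The minor `(M|G)/F` of a matroid. -/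
noncomputable def minorIC {α : Type*} (M : Matroid α) (G F : Set α) : Matroid α :=
  contract (M ↾ G) F

/-- A connected matroid: nonempty ground set, and any two distinct elements lie in a
common circuit. -/
def MConnected {α : Type*} (M : Matroid α) : Prop :=
  M.E.Nonempty ∧ ∀ e ∈ M.E, ∀ f ∈ M.E, e = f ∨ ∃ C, Circuit M C ∧ e ∈ C ∧ f ∈ C

/-- The matroid is a single loop. -/
def IsLoopMatroid {α : Type*} (M : Matroid α) : Prop := ∃ e, M.E = {e} ∧ Loop M e

/-- The matroid is a single coloop (isthmus). -/
def IsColoopMatroid {α : Type*} (M : Matroid α) : Prop := ∃ e, M.E = {e} ∧ Coloop M e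

/-- `(ε, ι, F', F)` is a connected filtration of the ordered matroid `M`:
a chain `∅ = F'_ε ⊂ ... ⊂ F'_0 = F_c = F_0 ⊂ ... ⊂ F_ι = M.E` such that the minima
`min (F_k \ F_{k-1})` (for `1 ≤ k ≤ ι`) are increasing in `k`, the minima
`min (F'_{k-1} \ F'_k)` (for `1 ≤ k ≤ ε`) are increasing in `k`, each minor
`(M|F_k)/F_{k-1}` is connected and not a loop, and each minor `(M|F'_{k-1})/F'_k`
is connected and not a coloop. -/
def IsConnFiltration {α : Type*} [LinearOrder α] (M : Matroid α)
    (ε ι : ℕ) (F' F : ℕ → Set α) : Prop :=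
  F' ε = ∅ ∧ F' 0 = F 0 ∧ F ι = M.E ∧
  (∀ k, k < ι → F k ⊂ F (k + 1)) ∧
  (∀ k, k < ε → F' (k + 1) ⊂ F' k) ∧
  (∀ k, k + 1 < ι → ∃ a b, IsLeast (F (k + 1) \ F k) a ∧
    IsLeast (F (k + 2) \ F (k + 1)) b ∧ a < b) ∧
  (∀ k, k + 1 < ε → ∃ a b, IsLeast (F' k \ F' (k + 1)) a ∧
    IsLeast (F' (k + 1) \ F' (k + 2)) b ∧ a < b) ∧
  (∀ k, k < ι → MConnected (minorIC M (F (k + 1)) (F k)) ∧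
    ¬ IsLoopMatroid (minorIC M (F (k + 1)) (F k))) ∧
  (∀ k, k < ε → MConnected (minorIC M (F' k) (F' (k + 1))) ∧
    ¬ IsColoopMatroid (minorIC M (F' k) (F' (k + 1))))

end AB

/-! Contraction and restriction are exchanged by duality, so for `F ⊆ G ⊆ E` the minor
`(M|G)/F` has dual `M✶|(E \ F)/(E \ G)`. Complementation reverses the chain and leaves each
difference `F_k \ F_{k-1}` unchanged, so the minima condition is preserved; connectedness
passes to duals (two elements of a common circuit lie in a common fundamental cocircuit),
and loops and coloops are exchanged. -/

namespace AB
open Set Matroid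

variable {α : Type*}

lemma circuit_iff_isCircuit {M : Matroid α} {C : Set α} : Circuit M C ↔ M.IsCircuit C :=
  isCircuit_iff_forall_ssubset.symm

lemma minorIC_eq (M : Matroid α) (G F : Set α) : minorIC M G F = (M ↾ G) ／ F := rfl

lemma minorIC_dual (M : Matroid α) {F G : Set α} (hFG : F ⊆ G) (hG : G ⊆ M.E) :
    (minorIC M G F)✶ = minorIC M✶ (M.E \ F) (M.E \ G) := by
  rw [minorIC_eq, minorIC_eq, dual_contract, ← delete_compl hG, dual_delete,
    restrict_contract_eq_contract_restrict _ (sdiff_subset_sdiff_right hFG), delete_eq_restrict]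
  congr 1
  ext x
  simp only [contract_ground, dual_ground, mem_sdiff]
  tauto

theorem _root_.Matroid.IsCircuit.exists_isCocircuit_mem_mem {M : Matroid α} {C : Set α} {e f : α}
    (hC : M.IsCircuit C) (he : e ∈ C) (hf : f ∈ C) (hef : e ≠ f) :
    ∃ K, M.IsCocircuit K ∧ e ∈ K ∧ f ∈ K := by
  obtain ⟨B, hB, hCB⟩ := (hC.sdiff_singleton_indep he).exists_isBase_superset
  have hfB : f ∈ B := hCB ⟨hf, hef.symm⟩
  have hC_eq : C = M.fundCircuit e B :=
    hC.eq_fundCircuit_of_subset hB.indep fun x hx ↦ by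
      obtain rfl | hxe := eq_or_ne x e
      exacts [mem_insert x B, mem_insert_of_mem e (hCB ⟨hx, hxe⟩)]
  exact ⟨M.fundCocircuit f B, fundCocircuit_isCocircuit hfB hB,
    hB.mem_fundCocircuit_iff_mem_fundCircuit.2 (hC_eq ▸ hf), M.mem_fundCocircuit f B⟩

lemma MConnected.dual {M : Matroid α} (h : MConnected M) : MConnected M✶ := by
  refine ⟨h.1, fun e he f hf ↦ ?_⟩
  obtain rfl | hef := eq_or_ne e f
  · exact .inl rfl
  obtain ⟨C, hC, heC, hfC⟩ := (h.2 e he f hf).resolve_left hef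
  obtain ⟨K, hK, heK, hfK⟩ :=
    (circuit_iff_isCircuit.1 hC).exists_isCocircuit_mem_mem heC hfC hef
  exact .inr ⟨K, circuit_iff_isCircuit.2 hK, heK, hfK⟩

lemma isLoopMatroid_dual_iff {N : Matroid α} : IsLoopMatroid N✶ ↔ IsColoopMatroid N :=
  Iff.rfl

lemma isColoopMatroid_dual_iff {N : Matroid α} : IsColoopMatroid N✶ ↔ IsLoopMatroid N := by
  simp only [IsColoopMatroid, IsLoopMatroid, Coloop, dual_dual, dual_ground]

lemma le_of_forall_lt_le_succ {β : Type*} [Preorder β] {f : ℕ → β} {n k : ℕ}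
    (h : ∀ j < n, f j ≤ f (j + 1)) (hk : k ≤ n) : f k ≤ f n := by
  induction n with
  | zero => rw [Nat.le_zero.1 hk]
  | succ n ih =>
    obtain rfl | hk := hk.eq_or_lt
    · rfl
    · exact (ih (fun j hj ↦ h j (by omega)) (by omega)).trans (h n n.lt_succ_self)

lemma compl_ssubset_compl_of_ssubset {E A B : Set α} (hAB : A ⊂ B) (hB : B ⊆ E) :
    E \ B ⊂ E \ A :=
  ⟨sdiff_subset_sdiff_right hAB.subset,
    fun h ↦ hAB.not_subset ((sdiff_le_sdiff_iff_le (hAB.subset.trans hB) hB).1 h)⟩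

section Filtration

variable [LinearOrder α] {M : Matroid α} {ε ι : ℕ} {F' F : ℕ → Set α}

lemma IsConnFiltration.upper_subset_ground (h : IsConnFiltration M ε ι F' F) ⦃k : ℕ⦄
    (hk : k ≤ ι) : F k ⊆ M.E :=
  h.2.2.1 ▸ le_of_forall_lt_le_succ (fun j hj ↦ (h.2.2.2.1 j hj).subset) hk

lemma IsConnFiltration.lower_subset_ground (h : IsConnFiltration M ε ι F' F) ⦃k : ℕ⦄
    (hk : k ≤ ε) : F' k ⊆ M.E :=
  calc F' k ⊆ F' 0 := le_of_forall_lt_le_succ (β := (Set α)ᵒᵈ)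
        (fun j hj ↦ (h.2.2.2.2.1 j (by omega)).subset) (Nat.zero_le k)
    _ = F 0 := h.2.1
    _ ⊆ M.E := h.upper_subset_ground (Nat.zero_le ι)

lemma IsConnFiltration.dual (h : IsConnFiltration M ε ι F' F) :
    IsConnFiltration M✶ ι ε (fun k ↦ M.E \ F k) (fun k ↦ M.E \ F' k) := by
  have hE := h.upper_subset_ground
  have hE' := h.lower_subset_ground
  obtain ⟨hF'ε, hF0, hFι, hF, hF', hmin, hmin', hconn, hconn'⟩ := h
  refine ⟨?_, ?_, ?_, ?_, ?_, ?_, ?_, ?_, ?_⟩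
  · simp only [hFι, sdiff_self]
  · simp only [hF0]
  · simp only [hF'ε, sdiff_empty, dual_ground]
  · exact fun k hk ↦ compl_ssubset_compl_of_ssubset (hF' k hk) (hE' hk.le)
  · exact fun k hk ↦ compl_ssubset_compl_of_ssubset (hF k hk) (hE hk)
  · intro k hk
    simpa only [sdiff_sdiff_sdiff_cancel_left (hE' (k := k) (by omega)),
      sdiff_sdiff_sdiff_cancel_left (hE' (k := k + 1) (by omega))] using hmin' k hk
  · intro k hk
    simpa only [sdiff_sdiff_sdiff_cancel_left (hE (k := k + 1) (by omega)),
      sdiff_sdiff_sdiff_cancel_left (hE (k := k + 2) (by omega))] using hmin k hk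
  · intro k hk
    rw [← minorIC_dual M (hF' k hk).subset (hE' hk.le)]
    exact ⟨(hconn' k hk).1.dual, fun hl ↦ (hconn' k hk).2 (isLoopMatroid_dual_iff.1 hl)⟩
  · intro k hk
    rw [← minorIC_dual M (hF k hk).subset (hE hk)]
    exact ⟨(hconn k hk).1.dual, fun hl ↦ (hconn k hk).2 (isColoopMatroid_dual_iff.1 hl)⟩

end Filtration

end AB

theorem stmt_12_general {α : Type*} [LinearOrder α] (M : Matroid α)
    (ε ι : ℕ) (F' F : ℕ → Set α) (h : AB.IsConnFiltration M ε ι F' F) :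
    AB.IsConnFiltration M✶ ι ε (fun k => M.E \ F k) (fun k => M.E \ F' k) ∧
      ∀ k, k < ι →
        (AB.minorIC M (F (k + 1)) (F k))✶
          = AB.minorIC M✶ (M.E \ F k) (M.E \ F (k + 1)) :=
  ⟨h.dual, fun k hk ↦ AB.minorIC_dual M (h.2.2.2.1 k hk).subset (h.upper_subset_ground hk)⟩

/-- If `(F'_ε,...,F'_0,F_c,F_0,...,F_ι)` is a connected filtration of
`M`, then the reversed complements form a connected filtration of the dual `M✶`, and for
`1 ≤ k ≤ ι`, `((M|F_k)/F_{k-1})✶ = M✶|(E \ F_{k-1}) / (E \ F_k)`. -/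
theorem stmt_12 {α : Type*} [LinearOrder α] (M : Matroid α) [M.Finite]
    (ε ι : ℕ) (F' F : ℕ → Set α) (h : AB.IsConnFiltration M ε ι F' F) :
    AB.IsConnFiltration M✶ ι ε (fun k => M.E \ F k) (fun k => M.E \ F' k) ∧
      ∀ k, k < ι →
        (AB.minorIC M (F (k + 1)) (F k))✶
          = AB.minorIC M✶ (M.E \ F k) (M.E \ F (k + 1)) :=
  stmt_12_general M ε ι F' F h
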